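/- Let A be an invertible n×n matrix over a field. Then every entry of A⁻¹ can be nonzero only at positions (i,j) such that there is a path (possibly of length 0) from i to j in the adjacency graph of A. Formally: if there is no sequence i = i₀, i₁, …, i_m = j with A_{i_t i_{t+1}} ≠ 0 for all t (allowing m = 0 when i = j), then (A⁻¹)_{ij} = 0. -/
import Mathlib

open Matrix

theorem stmt_2 {n : ℕ} {F : Type*} [Field F]
    (A : Matrix (Fin n) (Fin n) F) (hA : IsUnit A.det) :
    ∀ i j : Fin n,
      ¬ Relation.ReflTransGen (fun a b : Fin n => A a b ≠ 0) i j →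
      A⁻¹ i j = 0 := by
  classical
  intro i j hij
  set r : Fin n → Fin n → Prop := fun a b => A a b ≠ 0 with hr
  set P : Fin n → Prop := fun k => Relation.ReflTransGen r i k with hP
  set e : {k // P k} ⊕ {k // ¬ P k} ≃ Fin n := Equiv.sumCompl P with he
  set B : Matrix _ _ F := A.submatrix e e with hB
  have h12 : B.toBlocks₁₂ = 0 := by
    ext a b
    simp only [Matrix.toBlocks₁₂, Matrix.of_apply, hB, he, Matrix.submatrix_apply,
      Equiv.sumCompl_apply_inl, Equiv.sumCompl_apply_inr, Matrix.zero_apply]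
    by_contra h
    exact b.2 (a.2.tail h)
  have hBeq : B = Matrix.fromBlocks B.toBlocks₁₁ 0 B.toBlocks₂₁ B.toBlocks₂₂ := by
    rw [← h12, Matrix.fromBlocks_toBlocks]
  have hBunit : IsUnit B := by
    rw [hB, Matrix.isUnit_submatrix_equiv]
    exact (Matrix.isUnit_iff_isUnit_det A).mpr hA
  have hblocks : IsUnit B.toBlocks₁₁ ∧ IsUnit B.toBlocks₂₂ := by
    rw [hBeq] at hBunit
    exact Matrix.isUnit_fromBlocks_zero₁₂.mp hBunit
  have hBinv : B⁻¹ = Matrix.fromBlocks B.toBlocks₁₁⁻¹ 0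
      (-(B.toBlocks₂₂⁻¹ * B.toBlocks₂₁ * B.toBlocks₁₁⁻¹)) B.toBlocks₂₂⁻¹ := by
    rw [hBeq]
    exact Matrix.inv_fromBlocks_zero₁₂_of_isUnit_iff _ _ _ (by simp [hblocks.1, hblocks.2])
  have key : B⁻¹ (Sum.inl ⟨i, Relation.ReflTransGen.refl⟩) (Sum.inr ⟨j, hij⟩) = 0 := by
    rw [hBinv]; rfl
  have : B⁻¹ = A⁻¹.submatrix e e := by
    rw [hB, Matrix.inv_submatrix_equiv]
  rw [this] at key
  simpa [he, Equiv.sumCompl_apply_inl, Equiv.sumCompl_apply_inr] using key
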